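/- The acceptance set A^reg = { X ∈ L^0_d : ∃ Z ∈ (L^1_d)_+ with X + Z − diag(α)^{-1}E[Z]·1 ∈ (L^0_d)_+ } is a convex cone satisfying A^reg + (L^0_d)_+ = A^reg, M_+·1 ⊆ A^reg, and (−M_+·1) ∩ A^reg = {0}. -/
import Mathlib


open MeasureTheory Pointwise

noncomputable section

/-- The ordering cone `M₊ = M ∩ ℝ^d₊` of the space of eligible portfolios. -/
def Mplus {d : ℕ} (M : Submodule ℝ (Fin d → ℝ)) : Set (Fin d → ℝ) :=
  {k | k ∈ M ∧ ∀ i, 0 ≤ k i}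

/-- The acceptance set of the regulator average value at risk. -/
def Areg {Ω : Type*} [MeasureSpace Ω] {d : ℕ} (α : Fin d → ℝ) :
    Set (Ω → Fin d → ℝ) :=
  {X | Measurable X ∧ ∃ Z : Ω → Fin d → ℝ,
      (∀ i, Integrable (fun ω => Z ω i)) ∧
      (∀ᵐ ω ∂(volume : Measure Ω), ∀ i, 0 ≤ Z ω i) ∧
      (∀ᵐ ω ∂(volume : Measure Ω), ∀ i, 0 ≤ X ω i + Z ω i - (α i)⁻¹ * (∫ ω', Z ω' i))}

/-- The cone of a.s. componentwise nonnegative random vectors. -/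
def L0plus (Ω : Type*) [MeasureSpace Ω] (d : ℕ) : Set (Ω → Fin d → ℝ) :=
  {U | Measurable U ∧ ∀ᵐ ω ∂(volume : Measure Ω), ∀ i, 0 ≤ U ω i}

lemma const_mem_Areg {Ω : Type*} [MeasureSpace Ω]
    [IsProbabilityMeasure (volume : Measure Ω)]
    {d : ℕ} (α : Fin d → ℝ) (k : Fin d → ℝ) (hk : ∀ i, 0 ≤ k i) :
    (fun _ : Ω => k) ∈ Areg (Ω := Ω) α := by
  refine ⟨measurable_const, fun _ _ => 0, fun i => ?_, ?_, ?_⟩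
  · simp
  · exact Filter.Eventually.of_forall fun ω i => le_refl 0
  · refine Filter.Eventually.of_forall fun ω i => ?_
    simp [hk i]

/-- Properties of the acceptance set of the regulator AV@R. -/
theorem areg_properties {Ω : Type*} [MeasureSpace Ω]
    [IsProbabilityMeasure (volume : Measure Ω)]
    {d : ℕ} (hd : 1 ≤ d) (α : Fin d → ℝ) (hα : ∀ i, α i ∈ Set.Ioc (0 : ℝ) 1)
    (M : Submodule ℝ (Fin d → ℝ)) (hM : ∃ k ∈ Mplus M, k ≠ 0) :
    Convex ℝ (Areg (Ω := Ω) α) ∧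
    (∀ c : ℝ, 0 < c → c • Areg (Ω := Ω) α ⊆ Areg (Ω := Ω) α) ∧
    Areg (Ω := Ω) α + L0plus Ω d = Areg (Ω := Ω) α ∧
    (∀ k ∈ Mplus M, (fun _ : Ω => k) ∈ Areg (Ω := Ω) α) ∧
    {X : Ω → Fin d → ℝ | ∃ k ∈ Mplus M, X = fun _ : Ω => -k} ∩ Areg (Ω := Ω) α =
      {fun _ : Ω => (0 : Fin d → ℝ)} := by
  refine ⟨?_, ?_, ?_, ?_, ?_⟩
  · -- Convexity
    rintro X ⟨hXm, Z, hZint, hZpos, hZineq⟩ Y ⟨hYm, W, hWint, hWpos, hWineq⟩ a b ha hb hab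
    refine ⟨?_, fun ω i => a * Z ω i + b * W ω i, ?_, ?_, ?_⟩
    · rw [measurable_pi_iff]
      intro i
      have h1 : Measurable fun ω => X ω i := (measurable_pi_apply i).comp hXm
      have h2 : Measurable fun ω => Y ω i := (measurable_pi_apply i).comp hYm
      exact (h1.const_mul a).add (h2.const_mul b)
    · exact fun i => ((hZint i).const_mul a).add ((hWint i).const_mul b)
    · filter_upwards [hZpos, hWpos] with ω h1 h2 i
      exact add_nonneg (mul_nonneg ha (h1 i)) (mul_nonneg hb (h2 i))
    · have hint : ∀ i, (∫ ω', a * Z ω' i + b * W ω' i) =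
          a * (∫ ω', Z ω' i) + b * (∫ ω', W ω' i) := by
        intro i
        rw [integral_add ((hZint i).const_mul a) ((hWint i).const_mul b),
          integral_const_mul, integral_const_mul]
      filter_upwards [hZineq, hWineq] with ω h1 h2 i
      have := h1 i
      have := h2 i
      have hXY : (a • X + b • Y) ω i = a * X ω i + b * Y ω i := by
        simp [smul_eq_mul]
      rw [hXY, hint i]
      nlinarith [h1 i, h2 i, ha, hb]
  · -- Cone
    rintro c hc X ⟨Y, ⟨hYm, Z, hZint, hZpos, hZineq⟩, rfl⟩
    refine ⟨?_, fun ω i => c * Z ω i, fun i => (hZint i).const_mul c, ?_, ?_⟩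
    · rw [measurable_pi_iff]
      intro i
      exact ((measurable_pi_apply i).comp hYm).const_mul c
    · filter_upwards [hZpos] with ω h1 i
      exact mul_nonneg hc.le (h1 i)
    · filter_upwards [hZineq] with ω h1 i
      have hci : (∫ ω', c * Z ω' i) = c * ∫ ω', Z ω' i := integral_const_mul _ _
      have hXY : (c • Y) ω i = c * Y ω i := by simp [smul_eq_mul]
      rw [hXY, hci]
      nlinarith [h1 i, hc]
  · -- Areg + L0plus = Areg
    ext X
    constructor
    · rintro ⟨Y, ⟨hYm, Z, hZint, hZpos, hZineq⟩, U, ⟨hUm, hUpos⟩, rfl⟩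
      refine ⟨?_, Z, hZint, hZpos, ?_⟩
      · rw [measurable_pi_iff]
        intro i
        exact ((measurable_pi_apply i).comp hYm).add ((measurable_pi_apply i).comp hUm)
      · filter_upwards [hZineq, hUpos] with ω h1 h2 i
        have := h1 i
        have := h2 i
        simp only [Pi.add_apply]
        linarith
    · intro hX
      exact ⟨X, hX, 0, ⟨measurable_const, Filter.Eventually.of_forall fun ω i => le_refl 0⟩,
        by simp⟩
  · -- constants
    rintro k ⟨-, hk⟩
    exact const_mem_Areg α k hk
  · -- intersection
    ext X
    simp only [Set.mem_inter_iff, Set.mem_setOf_eq, Set.mem_singleton_iff]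
    constructor
    · rintro ⟨⟨k, ⟨hkM, hk0⟩, rfl⟩, hXm, Z, hZint, hZpos, hZineq⟩
      have hk : ∀ i, k i = 0 := by
        intro i
        set t : ℝ := ∫ ω', Z ω' i with ht
        have htnn : 0 ≤ t := by
          refine integral_nonneg_of_ae ?_
          filter_upwards [hZpos] with ω h using h i
        have hle : k i + (α i)⁻¹ * t ≤ t := by
          have hmono : (∫ _ : Ω, (k i + (α i)⁻¹ * t)) ≤ ∫ ω', Z ω' i := by
            refine integral_mono_ae (integrable_const _) (hZint i) ?_
            filter_upwards [hZineq] with ω h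
            have := h i
            simp only [Pi.neg_apply] at this
            rw [← ht] at this
            linarith
          simpa using hmono
        have hαi := hα i
        have hinv : 1 ≤ (α i)⁻¹ := one_le_inv_iff₀.mpr ⟨hαi.1, hαi.2⟩
        nlinarith [hk0 i, mul_nonneg (sub_nonneg.2 hinv) htnn]
      funext ω i
      simp [hk i]
    · rintro rfl
      refine ⟨⟨0, ⟨M.zero_mem, fun i => le_refl 0⟩, by funext ω; simp⟩, ?_⟩
      exact const_mem_Areg α 0 fun i => le_refl 0
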